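/- arXiv:2301.10199 — 5 statements merged into one kernel-verified Lean document; each statement's English description precedes it below -/
import Mathlib

section
/- Let 0 < σ ≤ d, d ≥ 1, ζ ∈ (0,1], and ε ∈ (0, ζ/6]. Let f : [0,1] → [0,∞) be a piecewise affine d-Lipschitz function with f(0) = 0 such that f(x) ≥ σx − ε for all x ∈ [0,1]. Then there exists a point a ∈ [ζ/(12d), 1/3] such that f(x) − f(a) ≥ (σ − ζ)(x − a) for all x ∈ [a,1]. -/
/-!
Take `a` minimising `f x - (σ - ζ) x` over `[ζ/(12D), 1/3]`. Beyond `1/3` the superlinearity bound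
gives `f x - (σ - ζ) x ≥ ζ x - ε ≥ ζ/6`, while the Lipschitz bound at the left endpoint `l` gives
`f l - (σ - ζ) l ≤ (D + ζ) l ≤ ζ/6`; so `a` minimises `f x - (σ - ζ) x` over all of `[a, 1]`.
-/

open Set

def PiecewiseAffineOn (f : ℝ → ℝ) (a b : ℝ) : Prop :=
  ∃ (n : ℕ) (t : ℕ → ℝ), t 0 = a ∧ t n = b ∧ (∀ i < n, t i < t (i + 1)) ∧
    ∀ i < n, ∃ p q : ℝ, ∀ x ∈ Set.Icc (t i) (t (i + 1)), f x = p * x + q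

theorem exists_mem_Icc_forall_mul_sub_le_sub {f : ℝ → ℝ} {s l m r : ℝ} (hlm : l ≤ m)
    (hf : ContinuousOn f (Icc l m)) (htail : ∀ x ∈ Icc m r, f l - s * l ≤ f x - s * x) :
    ∃ a ∈ Icc l m, ∀ x ∈ Icc a r, s * (x - a) ≤ f x - f a := by
  obtain ⟨a, ha, hmin⟩ := isCompact_Icc.exists_isMinOn (nonempty_Icc.2 hlm)
    (hf.sub (continuousOn_const.mul continuousOn_id))
  refine ⟨a, ha, fun x hx => ?_⟩
  have key : f a - s * a ≤ f x - s * x := by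
    rcases le_total x m with hxm | hxm
    · exact hmin ⟨ha.1.trans hx.1, hxm⟩
    · exact (hmin ⟨le_rfl, hlm⟩).trans (htail x ⟨hxm, hx.2⟩)
  linarith

theorem stmt6_general (σ D ζ ε : ℝ) (f : ℝ → ℝ)
    (hσ0 : 0 < σ) (hD : 1 ≤ D) (hζ0 : 0 < ζ) (hζ1 : ζ ≤ 1)
    (hεζ : ε ≤ ζ / 6)
    (hlip : ∀ x ∈ Set.Icc (0:ℝ) 1, ∀ y ∈ Set.Icc (0:ℝ) 1, |f x - f y| ≤ D * |x - y|)
    (hf0 : f 0 = 0)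
    (hsup : ∀ x ∈ Set.Icc (0:ℝ) 1, σ * x - ε ≤ f x) :
    ∃ a : ℝ, ζ / (12 * D) ≤ a ∧ a ≤ 1 / 3 ∧
      ∀ x ∈ Set.Icc a 1, (σ - ζ) * (x - a) ≤ f x - f a := by
  have hD0 : 0 < D := by linarith
  set l := ζ / (12 * D) with hl
  have hl0 : 0 < l := by positivity
  have hDl : D * l = ζ / 12 := by rw [hl]; field_simp
  have hl12 : l ≤ 1 / 12 := by nlinarith
  have hlip' : LipschitzOnWith (Real.toNNReal D) f (Icc 0 1) :=
    LipschitzOnWith.of_dist_le_mul fun x hx y hy => by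
      simpa [Real.dist_eq, Real.coe_toNNReal D hD0.le] using hlip x hx y hy
  have hfl : f l ≤ D * l := by
    simpa [hf0, abs_of_pos hl0] using (le_abs_self _).trans
      (hlip l ⟨hl0.le, by linarith⟩ 0 ⟨le_rfl, zero_le_one⟩)
  obtain ⟨a, ⟨hla, ha⟩, hslope⟩ := exists_mem_Icc_forall_mul_sub_le_sub (s := σ - ζ) (r := 1)
    (by linarith : l ≤ 1 / 3)
    (hlip'.continuousOn.mono (Icc_subset_Icc hl0.le (by norm_num))) fun x hx => by
      have hζl : ζ * l ≤ ζ / 12 := by nlinarith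
      have hζx : ζ / 3 ≤ ζ * x := by nlinarith [hx.1]
      have := hsup x ⟨by linarith [hx.1], hx.2⟩
      linarith [mul_pos hσ0 hl0]
  exact ⟨a, hla, ha, hslope⟩

/-- Corollary to Lemma on weak branching decompositions:
if `f : [0,1] → [0,∞)` is piecewise affine, `D`-Lipschitz, `f(0) = 0` and
`(f,0,1)` is `(σ,ε)`-superlinear with `0 < σ ≤ D`, `D ≥ 1`, `ζ ∈ (0,1]`,
`ε ∈ (0,ζ/6]`, then there is `a ∈ [ζ/(12D), 1/3]` with `(f,a,1)` being
`(σ−ζ,0)`-superlinear. -/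
theorem stmt6 (σ D ζ ε : ℝ) (f : ℝ → ℝ)
    (hσ0 : 0 < σ) (hσd : σ ≤ D) (hD : 1 ≤ D) (hζ0 : 0 < ζ) (hζ1 : ζ ≤ 1)
    (hε0 : 0 < ε) (hεζ : ε ≤ ζ / 6)
    (hpa : PiecewiseAffineOn f 0 1)
    (hlip : ∀ x ∈ Set.Icc (0:ℝ) 1, ∀ y ∈ Set.Icc (0:ℝ) 1, |f x - f y| ≤ D * |x - y|)
    (hf0 : f 0 = 0)
    (hnn : ∀ x ∈ Set.Icc (0:ℝ) 1, 0 ≤ f x)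
    (hsup : ∀ x ∈ Set.Icc (0:ℝ) 1, σ * x - ε ≤ f x) :
    ∃ a : ℝ, ζ / (12 * D) ≤ a ∧ a ≤ 1 / 3 ∧
      ∀ x ∈ Set.Icc a 1, (σ - ζ) * (x - a) ≤ f x - f a :=
  stmt6_general σ D ζ ε f hσ0 hD hζ0 hζ1 hεζ hlip hf0 hsup
end

section
/- Let A, B ⊂ ℝ be finite with A δ-separated, and suppose E_δ(A,B) ≥ |A||B|²/K for some K ≥ 1. Then the set of popular pairs G := {(a₁,b₁) ∈ A × B : |{(a₂,b₂) ∈ A × B : |(a₁+b₁)−(a₂+b₂)| ≤ δ}| ≥ |B|/(2K)} satisfies |G| ≥ |A||B|/(4K), and the restricted sumset A +_G B = {a+b : (a,b) ∈ G} satisfies |A +_G B|_δ ≤ 2K|A| (up to an absolute multiplicative constant). -/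
noncomputable def addEnergy (δ : ℝ) (A B : Set ℝ) : ℕ :=
  Set.ncard {q : (ℝ × ℝ) × ℝ × ℝ |
    q.1.1 ∈ A ∧ q.1.2 ∈ A ∧ q.2.1 ∈ B ∧ q.2.2 ∈ B ∧
    |(q.1.1 + q.2.1) - (q.1.2 + q.2.2)| ≤ δ}

noncomputable def cov1 (δ : ℝ) (X : Set ℝ) : ℕ :=
  Set.ncard {k : ℤ | ∃ x ∈ X, (k : ℝ) * δ ≤ x ∧ x < ((k : ℝ) + 1) * δ}

/-- The set of "popular pairs" `(a₁,b₁) ∈ A×B`, i.e. those for which at least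
`|B|/(2K)` pairs `(a₂,b₂) ∈ A×B` satisfy `|(a₁+b₁)−(a₂+b₂)| ≤ δ`. -/
def popular (δ K : ℝ) (A B : Set ℝ) : Set (ℝ × ℝ) :=
  {p | p ∈ A ×ˢ B ∧
    (B.ncard : ℝ) / (2 * K) ≤
      (Set.ncard {q : ℝ × ℝ | q ∈ A ×ˢ B ∧ |(p.1 + p.2) - (q.1 + q.2)| ≤ δ} : ℝ)}

/-!
Because `A` is `δ`-separated, a sum `a₁ + b₁` is `δ`-close to at most two sums `a₂ + b₂` with a
given `b₂`, hence to at most `2|B|` pairs. The energy counts, for every pair of `A × B`, the pairs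
whose sum is `δ`-close to its own; splitting into popular and unpopular pairs bounds it by
`2|B|·|G| + |A||B|·|B|/(2K)`, which forces `|G| ≥ |A||B|/(4K)`.

For the covering number, every cell `[kδ, (k+1)δ)` met by a popular sum has at least `|B|/(2K)` sums
of `A × B` in itself or its two neighbours, while each sum is counted in this way by at most three
cells; so at most `6K|A|` cells are met.
-/

open Finset hiding addEnergy

lemma card_le_two_of_pairwise_lt_abs_sub {δ t : ℝ} {s : Finset ℝ}
    (hs : (s : Set ℝ).Pairwise fun x y => δ < |x - y|) (ht : ∀ x ∈ s, |t - x| ≤ δ) :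
    #s ≤ 2 := by
  have side (p : ℝ → Prop) [DecidablePred p]
      (hp : ∀ x ∈ s, p x → ∀ y ∈ s, p y → |x - y| ≤ δ) : #{x ∈ s | p x} ≤ 1 := by
    refine card_le_one.2 fun x hx y hy => by_contra fun hne => ?_
    rw [mem_filter] at hx hy
    exact (hs hx.1 hy.1 hne).not_ge (hp x hx.1 hx.2 y hy.1 hy.2)
  calc #s = #{x ∈ s | x ≤ t} + #{x ∈ s | ¬x ≤ t} := (card_filter_add_card_filter_not _).symm
    _ ≤ 1 + 1 := by
      gcongr <;> refine side _ fun x hx hxt y hy hyt => ?_ <;>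
      · have := ht x hx; have := ht y hy
        rw [abs_le] at *; constructor <;> linarith

noncomputable def nearPairs (δ : ℝ) (a b : Finset ℝ) (t : ℝ) : Finset (ℝ × ℝ) :=
  {q ∈ a ×ˢ b | |t - (q.1 + q.2)| ≤ δ}

noncomputable def popularPairs (δ θ : ℝ) (a b : Finset ℝ) : Finset (ℝ × ℝ) :=
  {p ∈ a ×ˢ b | θ ≤ #(nearPairs δ a b (p.1 + p.2))}

lemma card_nearPairs_le {δ : ℝ} {a : Finset ℝ} (ha : (a : Set ℝ).Pairwise fun x y => δ < |x - y|)
    (b : Finset ℝ) (t : ℝ) : #(nearPairs δ a b t) ≤ 2 * #b := by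
  refine card_le_mul_card_image_of_maps_to (f := Prod.snd)
    (fun q hq => (mem_product.1 (mem_filter.1 hq).1).2) 2 fun y _ => ?_
  calc #{q ∈ nearPairs δ a b t | q.2 = y} ≤ #{x ∈ a | |t - y - x| ≤ δ} := by
        refine card_le_card_of_injOn Prod.fst (fun q hq => ?_) fun q hq q' hq' h => ?_
        · simp only [nearPairs, coe_filter, mem_filter, mem_product] at hq
          obtain ⟨⟨⟨hq1, -⟩, hqt⟩, rfl⟩ := hq
          simpa [sub_sub, add_comm q.2] using ⟨hq1, hqt⟩
        · simp only [coe_filter] at hq hq'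
          exact Prod.ext h (hq.2.trans hq'.2.symm)
    _ ≤ 2 := card_le_two_of_pairwise_lt_abs_sub (ha.mono (filter_subset _ _))
        (fun x hx => (mem_filter.1 hx).2)

lemma addEnergy_coe_finset (δ : ℝ) (a b : Finset ℝ) :
    addEnergy δ a b = ∑ p ∈ a ×ˢ b, #(nearPairs δ a b (p.1 + p.2)) := by
  have h : {q : (ℝ × ℝ) × ℝ × ℝ | q.1.1 ∈ (a : Set ℝ) ∧ q.1.2 ∈ (a : Set ℝ) ∧
      q.2.1 ∈ (b : Set ℝ) ∧ q.2.2 ∈ (b : Set ℝ) ∧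
      |(q.1.1 + q.2.1) - (q.1.2 + q.2.2)| ≤ δ} = Equiv.prodProdProdComm ℝ ℝ ℝ ℝ ⁻¹'
      ↑{x ∈ (a ×ˢ b) ×ˢ (a ×ˢ b) | |(x.1.1 + x.1.2) - (x.2.1 + x.2.2)| ≤ δ} := by
    ext; simp [and_assoc, and_left_comm]
  rw [addEnergy, h, Set.ncard_preimage_of_injective_subset_range (Equiv.injective _) (by simp),
    Set.ncard_coe_finset, card_filter, sum_product]
  refine sum_congr rfl fun p _ => ?_
  rw [nearPairs, card_filter]

lemma popular_coe_finset (δ K : ℝ) (a b : Finset ℝ) :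
    popular δ K a b = popularPairs δ (#b / (2 * K)) a b := by
  have h (p : ℝ × ℝ) : {q : ℝ × ℝ | q ∈ (a : Set ℝ) ×ˢ (b : Set ℝ) ∧
      |(p.1 + p.2) - (q.1 + q.2)| ≤ δ} = nearPairs δ a b (p.1 + p.2) := by
    ext; simp [nearPairs]
  ext p
  simp only [popular, h, Set.ncard_coe_finset]
  simp [popularPairs]

lemma sum_le_card_filter_le_mul_add {ι : Type*} (s : Finset ι) (f : ι → ℝ) {M θ : ℝ}
    (hθ : 0 ≤ θ) (hM : ∀ i ∈ s, f i ≤ M) :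
    ∑ i ∈ s, f i ≤ #{i ∈ s | θ ≤ f i} * M + #s * θ := by
  rw [← sum_filter_add_sum_filter_not s (fun i => θ ≤ f i)]
  gcongr
  · exact (sum_le_card_nsmul _ _ _ fun i hi => hM i (mem_filter.1 hi).1).trans_eq (nsmul_eq_mul _ _)
  · calc ∑ i ∈ s with ¬θ ≤ f i, f i ≤ #{i ∈ s | ¬θ ≤ f i} * θ :=
          (sum_le_card_nsmul _ _ _ fun i hi => (not_le.1 (mem_filter.1 hi).2).le).trans_eq
            (nsmul_eq_mul _ _)
      _ ≤ #s * θ := by gcongr; exact filter_subset _ _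

lemma le_card_popularPairs {δ K : ℝ} {a : Finset ℝ}
    (ha : (a : Set ℝ).Pairwise fun x y => δ < |x - y|) (b : Finset ℝ) (hK : 0 < K)
    (hE : (#a : ℝ) * #b ^ 2 / K ≤ ∑ p ∈ a ×ˢ b, (#(nearPairs δ a b (p.1 + p.2)) : ℝ)) :
    (#a : ℝ) * #b / (4 * K) ≤ #(popularPairs δ (#b / (2 * K)) a b) := by
  rcases (#b).eq_zero_or_pos with hb | hb
  · simp [hb]
  set θ : ℝ := #b / (2 * K)
  have hsplit : ∑ p ∈ a ×ˢ b, (#(nearPairs δ a b (p.1 + p.2)) : ℝ) ≤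
      #(popularPairs δ θ a b) * (2 * #b) + #a * #b * θ := by
    rw [← Nat.cast_mul, ← card_product]
    exact sum_le_card_filter_le_mul_add _ _ (by positivity)
      fun p _ => by exact_mod_cast card_nearPairs_le ha b (p.1 + p.2)
  have hcollect : (#a : ℝ) * #b ^ 2 / K = #a * #b / (4 * K) * (2 * #b) + #a * #b * θ := by
    simp only [θ]; field_simp; ring
  refine le_of_mul_le_mul_right (a := 2 * (#b : ℝ)) ?_ (by positivity)
  linarith

lemma cov1_eq_ncard_image_floor {δ : ℝ} (hδ : 0 < δ) (X : Set ℝ) :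
    cov1 δ X = ((fun x => ⌊x / δ⌋) '' X).ncard := by
  unfold cov1
  congr 1
  ext k
  simp [Int.floor_eq_iff, le_div_iff₀ hδ, div_lt_iff₀ hδ]

lemma abs_floor_sub_floor_le_one {x y : ℝ} (h : |x - y| ≤ 1) : |⌊x⌋ - ⌊y⌋| ≤ 1 := by
  rw [abs_le] at h ⊢
  have h1 : ⌊x⌋ ≤ ⌊y⌋ + 1 := by rw [← Int.floor_add_one]; exact Int.floor_le_floor (by linarith)
  have h2 : ⌊y⌋ ≤ ⌊x⌋ + 1 := by rw [← Int.floor_add_one]; exact Int.floor_le_floor (by linarith)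
  constructor <;> linarith

lemma cov1_mul_le {ι : Type*} {δ θ : ℝ} (hδ : 0 < δ) {X : Set ℝ} (hX : X.Finite)
    (T : Finset ι) (s : ι → ℝ) (hθ : ∀ x ∈ X, θ ≤ #{i ∈ T | |x - s i| ≤ δ}) :
    (cov1 δ X : ℝ) * θ ≤ 3 * #T := by
  rw [cov1_eq_ncard_image_floor hδ, Set.ncard_eq_toFinset_card _ (hX.image _)]
  have := card_nsmul_le_card_nsmul (s := (hX.image fun x => ⌊x / δ⌋).toFinset) (t := T)
    (fun k i => |⌊s i / δ⌋ - k| ≤ 1) (m := θ) (n := (3 : ℝ)) ?_ ?_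
  · simpa [nsmul_eq_mul, mul_comm] using this
  · intro k hk
    obtain ⟨x, hx, rfl⟩ := by simpa using hk
    refine (hθ x hx).trans (Nat.cast_le.2 (card_le_card fun i hi => ?_))
    rw [mem_filter] at hi
    rw [mem_bipartiteAbove, abs_sub_comm]
    refine ⟨hi.1, abs_floor_sub_floor_le_one ?_⟩
    rw [← sub_div, abs_div, abs_of_pos hδ, div_le_one hδ]
    exact hi.2
  · intro i _
    calc (#(bipartiteBelow _ _ i) : ℝ) ≤ #(Icc (⌊s i / δ⌋ - 1) (⌊s i / δ⌋ + 1)) := by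
          refine mod_cast card_le_card fun k hk => ?_
          rw [mem_bipartiteBelow, abs_le] at hk
          rw [mem_Icc]; omega
      _ = 3 := by simp [show ⌊s i / δ⌋ + 1 + 1 - (⌊s i / δ⌋ - 1) = 3 by ring]

lemma cov1_sums_popularPairs_le {δ K : ℝ} (hδ : 0 < δ) (hK : 0 < K) (a b : Finset ℝ) :
    (cov1 δ {x | ∃ p ∈ (popularPairs δ (#b / (2 * K)) a b : Set (ℝ × ℝ)), x = p.1 + p.2} : ℝ) ≤
      6 * K * #a := by
  rcases b.eq_empty_or_nonempty with rfl | hb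
  · simp [popularPairs, cov1]; positivity
  set X := {x | ∃ p ∈ (popularPairs δ (#b / (2 * K)) a b : Set (ℝ × ℝ)), x = p.1 + p.2}
  have hX : X.Finite := ((popularPairs δ _ a b).finite_toSet.image fun p => p.1 + p.2).subset
    (by rintro x ⟨p, hp, rfl⟩; exact ⟨p, hp, rfl⟩)
  have hcov := cov1_mul_le hδ hX (a ×ˢ b) (fun q => q.1 + q.2)
    (by rintro x ⟨p, hp, rfl⟩; exact (mem_filter.1 hp).2)
  rw [card_product, Nat.cast_mul] at hcov
  have hb' : (0 : ℝ) < #b := by exact_mod_cast hb.card_pos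
  calc (cov1 δ X : ℝ) = cov1 δ X * (#b / (2 * K)) * (2 * K / #b) := by field_simp
    _ ≤ 3 * (#a * #b) * (2 * K / #b) := by gcongr
    _ = 6 * K * #a := by field_simp; ring

/-- if `A` is `δ`-separated and `E_δ(A,B) ≥ |A||B|²/K`, then the popular
pairs `G` satisfy `|G| ≥ |A||B|/(4K)` and `|A +_G B|_δ ≲ K|A|` (with an absolute
multiplicative constant). -/
theorem stmt9 : ∃ C₀ : ℝ, 0 < C₀ ∧
    ∀ (δ K : ℝ) (A B : Set ℝ), 0 < δ → 1 ≤ K → A.Finite → B.Finite →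
      (∀ a ∈ A, ∀ a' ∈ A, a ≠ a' → δ < |a - a'|) →
      (A.ncard : ℝ) * B.ncard ^ 2 / K ≤ (addEnergy δ A B : ℝ) →
      (A.ncard : ℝ) * B.ncard / (4 * K) ≤ ((popular δ K A B).ncard : ℝ) ∧
        (cov1 δ {x : ℝ | ∃ p ∈ popular δ K A B, x = p.1 + p.2} : ℝ) ≤
          C₀ * K * A.ncard := by
  refine ⟨6, by norm_num, fun δ K A B hδ hK hA hB hsep hE => ?_⟩
  obtain ⟨a, rfl⟩ := hA.exists_finset_coe
  obtain ⟨b, rfl⟩ := hB.exists_finset_coe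
  have hK0 : 0 < K := by linarith
  simp only [Set.ncard_coe_finset, addEnergy_coe_finset, Nat.cast_sum] at hE ⊢
  rw [popular_coe_finset, Set.ncard_coe_finset]
  exact ⟨le_card_popularPairs (fun x hx y hy => hsep x hx y hy) b hK0 hE,
    cov1_sums_popularPairs_le hδ hK0 a b⟩
end

section
/- Fix d ∈ ℕ and ε > 0. There exists τ = τ(ε,d) > 0 such that for any d-Lipschitz function f : [a,b] → ℝ there is a finite family of non-overlapping intervals {[c_j,d_j]}_{j=1}^M ⊂ [a,b] with: (i) f is ε-linear on each [c_j,d_j], i.e. |f(x) − L_{f,c_j,d_j}(x)| ≤ ε(d_j − c_j) for all x ∈ [c_j,d_j], where L_{f,c_j,d_j} is the affine function agreeing with f at c_j and d_j; (ii) d_j − c_j ≥ τ(b−a) for all j; (iii) the total length of [a,b] not covered by the intervals is at most ε(b−a). -/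
/-!
Let `s_m` be the step function recording the slopes of `f` on the `2^m` dyadic intervals of
generation `m` of `[a, b]`, and `E_m = ‖s_m‖₂²` its energy. Each slope of generation `m` is the
average of the `2^w` slopes below it in generation `m + w`, so by Pythagoras
`E_{m+w} - E_m = ‖s_{m+w} - s_m‖₂²`; moreover `0 ≤ E_m ≤ d²`. Among `W` consecutive blocks of
`w` generations one thus has an increment at most `d²/W`, and at its starting generation `m` all
but an `ε`-fraction of the intervals have every slope of generation `m + w` within `ε/2` of their
own. On such an interval, comparing `f` with its chord along the grid of generation `m + w` and
using the Lipschitz bound between grid points gives `ε`-linearity once `2d/2^w ≤ ε/2`. These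
intervals have length at least `2^{-Ww}(b - a)`.
-/

open Finset Set

theorem Finset.sum_range_mul_eq_sum_sum {M : Type*} [AddCommMonoid M] (g : ℕ → M) (n k : ℕ) :
    ∑ j ∈ range (n * k), g j = ∑ i ∈ range n, ∑ r ∈ range k, g (i * k + r) := by
  induction n with
  | zero => simp
  | succ n ih => rw [add_one_mul, sum_range_add, ih, sum_range_succ]

theorem Finset.sum_sq_sub_eq_of_sum_eq {ι : Type*} {t : Finset ι} {x : ι → ℝ} {s : ℝ}
    (h : ∑ i ∈ t, x i = #t * s) :
    ∑ i ∈ t, (x i - s) ^ 2 = ∑ i ∈ t, x i ^ 2 - #t * s ^ 2 := by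
  simp only [sub_sq, sum_add_distrib, sum_sub_distrib, sum_const, nsmul_eq_mul, ← sum_mul,
    ← mul_sum, h]
  ring

theorem abs_slope_le_of_abs_sub_le {f : ℝ → ℝ} {s : Set ℝ} {K : ℝ}
    (hf : ∀ x ∈ s, ∀ y ∈ s, |f x - f y| ≤ K * |x - y|) {x y : ℝ} (hx : x ∈ s) (hy : y ∈ s)
    (hxy : x ≠ y) : |slope f x y| ≤ K := by
  rw [slope_def_field, abs_div, div_le_iff₀ (abs_pos.2 (sub_ne_zero.2 hxy.symm))]
  exact hf y hy x hx

theorem abs_le_of_abs_sub_le_of_grid {g : ℝ → ℝ} {K h δ c : ℝ} {N : ℕ} (hK : 0 ≤ K)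
    (hh : 0 < h)
    (hg : ∀ x ∈ Icc c (c + N * h), ∀ y ∈ Icc c (c + N * h), |g x - g y| ≤ K * |x - y|)
    (hc : g c = 0) (hstep : ∀ t < N, |g (c + (t + 1) * h) - g (c + t * h)| ≤ δ) :
    ∀ x ∈ Icc c (c + N * h), |g x| ≤ N * δ + K * h := by
  have hgrid : ∀ t ≤ N, |g (c + t * h)| ≤ t * δ := by
    intro t ht
    induction t with
    | zero => simp [hc]
    | succ t ih =>
      push_cast
      calc |g (c + (t + 1) * h)|
          ≤ |g (c + (t + 1) * h) - g (c + t * h)| + |g (c + t * h)| := by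
            simpa using abs_sub_le (g (c + (t + 1) * h)) (g (c + t * h)) 0
        _ ≤ δ + t * δ := add_le_add (hstep t ht) (ih (by omega))
        _ = (t + 1) * δ := by ring
  intro x ⟨hcx, hxN⟩
  set t := ⌊(x - c) / h⌋₊
  have hxc : 0 ≤ (x - c) / h := div_nonneg (by linarith) hh.le
  have htN : t ≤ N := Nat.floor_le_of_le ((div_le_iff₀ hh).2 (by linarith))
  have hty : (t : ℝ) * h ≤ x - c := (le_div_iff₀ hh).1 (Nat.floor_le hxc)
  have hyt : x - c < (t + 1) * h := (div_lt_iff₀ hh).1 (Nat.lt_floor_add_one _)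
  have hNt : (t : ℝ) ≤ N := by exact_mod_cast htN
  have hy : c + t * h ∈ Icc c (c + N * h) := ⟨le_add_of_nonneg_right (by positivity), by gcongr⟩
  have htδ : (t : ℝ) * δ ≤ N * δ := by
    rcases htN.eq_or_lt with heq | hlt
    · rw [heq]
    · exact mul_le_mul_of_nonneg_right hNt ((abs_nonneg _).trans (hstep t hlt))
  calc |g x| ≤ |g x - g (c + t * h)| + |g (c + t * h)| := by
        simpa using abs_sub_le (g x) (g (c + t * h)) 0
    _ ≤ K * |x - (c + t * h)| + t * δ := add_le_add (hg x ⟨hcx, hxN⟩ _ hy) (hgrid t htN)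
    _ ≤ K * h + N * δ := by
        gcongr
        rw [abs_le]
        constructor <;> linarith
    _ = N * δ + K * h := add_comm _ _

noncomputable section

variable (f : ℝ → ℝ) (a b : ℝ)

def dyadicPt (m i : ℕ) : ℝ := a + i * ((b - a) / 2 ^ m)

theorem dyadicPt_succ_sub (m i : ℕ) :
    dyadicPt a b m (i + 1) - dyadicPt a b m i = (b - a) / 2 ^ m := by
  simp only [dyadicPt]; push_cast; ring

theorem dyadicPt_mul_pow_add (m w i r : ℕ) :
    dyadicPt a b (m + w) (i * 2 ^ w + r) = dyadicPt a b m i + r * ((b - a) / 2 ^ (m + w)) := by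
  simp only [dyadicPt, pow_add]; push_cast; field_simp; ring

theorem dyadicPt_mul_pow (m w i : ℕ) : dyadicPt a b (m + w) (i * 2 ^ w) = dyadicPt a b m i := by
  simpa using dyadicPt_mul_pow_add a b m w i 0

theorem dyadicPt_mem_Icc {a b : ℝ} (hab : a ≤ b) {m i : ℕ} (hi : i ≤ 2 ^ m) :
    dyadicPt a b m i ∈ Icc a b := by
  have hh : 0 ≤ (b - a) / 2 ^ m := div_nonneg (by linarith) (by positivity)
  have hi' : (i : ℝ) ≤ 2 ^ m := by exact_mod_cast hi
  refine ⟨le_add_of_nonneg_right (by positivity), ?_⟩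
  calc dyadicPt a b m i ≤ a + 2 ^ m * ((b - a) / 2 ^ m) := by unfold dyadicPt; gcongr
    _ = b := by field_simp; ring

theorem dyadicPt_strictMono {a b : ℝ} (hab : a < b) (m : ℕ) : StrictMono (dyadicPt a b m) := by
  intro i j hij
  have : (i : ℝ) < j := by exact_mod_cast hij
  have : 0 < (b - a) / 2 ^ m := div_pos (by linarith) (by positivity)
  unfold dyadicPt; gcongr

def dyadicSlope (m i : ℕ) : ℝ := slope f (dyadicPt a b m i) (dyadicPt a b m (i + 1))

theorem sub_eq_dyadicSlope_mul (m i : ℕ) :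
    f (dyadicPt a b m (i + 1)) - f (dyadicPt a b m i) =
      dyadicSlope f a b m i * ((b - a) / 2 ^ m) := by
  have h := sub_smul_slope f (dyadicPt a b m i) (dyadicPt a b m (i + 1))
  rw [smul_eq_mul, vsub_eq_sub, dyadicPt_succ_sub] at h
  rw [dyadicSlope, ← h, mul_comm]

theorem sum_dyadicSlope_children {a b : ℝ} (hab : a ≠ b) (m w i : ℕ) :
    ∑ r ∈ range (2 ^ w), dyadicSlope f a b (m + w) (i * 2 ^ w + r) =
      2 ^ w * dyadicSlope f a b m i := by
  have hh : (b - a) / 2 ^ (m + w) ≠ 0 := div_ne_zero (sub_ne_zero.2 hab.symm) (by positivity)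
  apply mul_right_cancel₀ hh
  calc (∑ r ∈ range (2 ^ w), dyadicSlope f a b (m + w) (i * 2 ^ w + r)) * ((b - a) / 2 ^ (m + w))
      = ∑ r ∈ range (2 ^ w), (f (dyadicPt a b (m + w) (i * 2 ^ w + (r + 1)))
          - f (dyadicPt a b (m + w) (i * 2 ^ w + r))) := by
        rw [sum_mul]
        exact sum_congr rfl fun r _ ↦ by rw [← sub_eq_dyadicSlope_mul]; rfl
    _ = f (dyadicPt a b m (i + 1)) - f (dyadicPt a b m i) := by
        rw [sum_range_sub (fun r ↦ f (dyadicPt a b (m + w) (i * 2 ^ w + r))), ← add_one_mul,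
          dyadicPt_mul_pow, add_zero, dyadicPt_mul_pow]
    _ = 2 ^ w * dyadicSlope f a b m i * ((b - a) / 2 ^ (m + w)) := by
        rw [sub_eq_dyadicSlope_mul, pow_add]; field_simp

theorem abs_dyadicSlope_le {a b : ℝ} (hab : a < b) {K : ℝ}
    (hf : ∀ x ∈ Icc a b, ∀ y ∈ Icc a b, |f x - f y| ≤ K * |x - y|) {m i : ℕ} (hi : i < 2 ^ m) :
    |dyadicSlope f a b m i| ≤ K :=
  abs_slope_le_of_abs_sub_le hf (dyadicPt_mem_Icc hab.le hi.le) (dyadicPt_mem_Icc hab.le hi)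
    (dyadicPt_strictMono hab m (Nat.lt_succ_self i)).ne

def dyadicEnergy (m : ℕ) : ℝ := (∑ i ∈ range (2 ^ m), dyadicSlope f a b m i ^ 2) / 2 ^ m

theorem dyadicEnergy_nonneg (m : ℕ) : 0 ≤ dyadicEnergy f a b m := by
  unfold dyadicEnergy; positivity

theorem dyadicEnergy_le {a b : ℝ} (hab : a < b) {K : ℝ}
    (hf : ∀ x ∈ Icc a b, ∀ y ∈ Icc a b, |f x - f y| ≤ K * |x - y|) (m : ℕ) :
    dyadicEnergy f a b m ≤ K ^ 2 := by
  rw [dyadicEnergy, div_le_iff₀ (by positivity)]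
  calc ∑ i ∈ range (2 ^ m), dyadicSlope f a b m i ^ 2 ≤ ∑ i ∈ range (2 ^ m), K ^ 2 := by
        refine sum_le_sum fun i hi ↦ ?_
        obtain ⟨hlo, hhi⟩ := abs_le.1 (abs_dyadicSlope_le f hab hf (mem_range.1 hi))
        exact sq_le_sq' hlo hhi
    _ = K ^ 2 * 2 ^ m := by rw [sum_const, card_range, nsmul_eq_mul]; push_cast; ring

theorem dyadicEnergy_add_sub {a b : ℝ} (hab : a ≠ b) (m w : ℕ) :
    dyadicEnergy f a b (m + w) - dyadicEnergy f a b m =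
      (∑ i ∈ range (2 ^ m), ∑ r ∈ range (2 ^ w),
        (dyadicSlope f a b (m + w) (i * 2 ^ w + r) - dyadicSlope f a b m i) ^ 2) / 2 ^ (m + w) := by
  have hvar : ∀ i, ∑ r ∈ range (2 ^ w),
      (dyadicSlope f a b (m + w) (i * 2 ^ w + r) - dyadicSlope f a b m i) ^ 2 =
      ∑ r ∈ range (2 ^ w), dyadicSlope f a b (m + w) (i * 2 ^ w + r) ^ 2
        - 2 ^ w * dyadicSlope f a b m i ^ 2 := fun i ↦ by
    have := sum_sq_sub_eq_of_sum_eq (t := range (2 ^ w)) (s := dyadicSlope f a b m i)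
      (x := fun r ↦ dyadicSlope f a b (m + w) (i * 2 ^ w + r))
      (by simpa using sum_dyadicSlope_children f hab m w i)
    simpa using this
  simp only [dyadicEnergy, hvar, sum_sub_distrib, ← mul_sum]
  rw [pow_add, sum_range_mul_eq_sum_sum]
  field_simp
  ring

def SlopesStable (η : ℝ) (m w i : ℕ) : Prop :=
  ∀ r < 2 ^ w, |dyadicSlope f a b (m + w) (i * 2 ^ w + r) - dyadicSlope f a b m i| ≤ η

theorem card_mul_sq_le_of_not_slopesStable {a b : ℝ} (hab : a ≠ b) {η : ℝ} (hη : 0 ≤ η)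
    {m w : ℕ} {B : Finset ℕ} (hB : B ⊆ range (2 ^ m))
    (hbad : ∀ i ∈ B, ¬ SlopesStable f a b η m w i) :
    #B * η ^ 2 ≤ 2 ^ (m + w) * (dyadicEnergy f a b (m + w) - dyadicEnergy f a b m) := by
  set dev := fun i r ↦ (dyadicSlope f a b (m + w) (i * 2 ^ w + r) - dyadicSlope f a b m i) ^ 2
  have hdev : ∀ i ∈ B, η ^ 2 ≤ ∑ r ∈ range (2 ^ w), dev i r := by
    intro i hi
    obtain ⟨r, hr, hlt⟩ : ∃ r < 2 ^ w,
        η < |dyadicSlope f a b (m + w) (i * 2 ^ w + r) - dyadicSlope f a b m i| := by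
      simpa [SlopesStable] using hbad i hi
    calc η ^ 2 ≤ |dyadicSlope f a b (m + w) (i * 2 ^ w + r) - dyadicSlope f a b m i| ^ 2 :=
          pow_le_pow_left₀ hη hlt.le 2
      _ = dev i r := sq_abs _
      _ ≤ ∑ r ∈ range (2 ^ w), dev i r :=
        single_le_sum (f := dev i) (fun _ _ ↦ sq_nonneg _) (mem_range.2 hr)
  rw [dyadicEnergy_add_sub f hab, mul_div_cancel₀ _ (by positivity)]
  calc #B * η ^ 2 = ∑ i ∈ B, η ^ 2 := by rw [sum_const, nsmul_eq_mul]
    _ ≤ ∑ i ∈ B, ∑ r ∈ range (2 ^ w), dev i r := sum_le_sum hdev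
    _ ≤ ∑ i ∈ range (2 ^ m), ∑ r ∈ range (2 ^ w), dev i r :=
        sum_le_sum_of_subset_of_nonneg hB fun _ _ _ ↦ sum_nonneg fun _ _ ↦ sq_nonneg _

theorem abs_sub_dyadicSlope_line_le {a b : ℝ} (hab : a < b) {K η : ℝ}
    (hf : ∀ x ∈ Icc a b, ∀ y ∈ Icc a b, |f x - f y| ≤ K * |x - y|) {m w i : ℕ}
    (hi : i < 2 ^ m) (hstable : SlopesStable f a b η m w i) :
    ∀ x ∈ Icc (dyadicPt a b m i) (dyadicPt a b m (i + 1)),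
      |f x - (f (dyadicPt a b m i) + dyadicSlope f a b m i * (x - dyadicPt a b m i))| ≤
        (η + 2 * K / 2 ^ w) * ((b - a) / 2 ^ m) := by
  set c := dyadicPt a b m i
  set s := dyadicSlope f a b m i
  set h := (b - a) / 2 ^ (m + w)
  have hs : |s| ≤ K := abs_dyadicSlope_le f hab hf hi
  have hgrid : ∀ t : ℕ, c + t * h = dyadicPt a b (m + w) (i * 2 ^ w + t) := fun t ↦
    (dyadicPt_mul_pow_add a b m w i t).symm
  have hend : c + ((2 ^ w : ℕ) : ℝ) * h = dyadicPt a b m (i + 1) := by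
    rw [hgrid, ← add_one_mul, dyadicPt_mul_pow]
  have hsub : Icc c (dyadicPt a b m (i + 1)) ⊆ Icc a b :=
    Icc_subset_Icc (dyadicPt_mem_Icc hab.le hi.le).1 (dyadicPt_mem_Icc hab.le hi).2
  rw [← hend]
  intro x hx
  -- `f` minus its chord is `2K`-Lipschitz and moves by at most `η h` per step of the finer grid.
  have hbound := abs_le_of_abs_sub_le_of_grid (g := fun x ↦ f x - (f c + s * (x - c)))
    (K := 2 * K) (δ := η * h) (by linarith [abs_nonneg s]) (by positivity) ?_ (by simp) ?_ x hx
  · calc _ ≤ ((2 ^ w : ℕ) : ℝ) * (η * h) + 2 * K * h := hbound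
      _ = (η + 2 * K / 2 ^ w) * ((b - a) / 2 ^ m) := by
        simp only [h, pow_add]; push_cast; field_simp
  · rw [hend]
    intro x hx y hy
    calc |f x - (f c + s * (x - c)) - (f y - (f c + s * (y - c)))|
        = |(f x - f y) - s * (x - y)| := by ring_nf
      _ ≤ |f x - f y| + |s| * |x - y| := by rw [← abs_mul]; exact abs_sub _ _
      _ ≤ K * |x - y| + K * |x - y| := by
        gcongr
        exact hf x (hsub hx) y (hsub hy)
      _ = 2 * K * |x - y| := by ring
  · intro t ht
    have hstep := sub_eq_dyadicSlope_mul f a b (m + w) (i * 2 ^ w + t)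
    rw [add_assoc, ← hgrid, ← hgrid] at hstep
    push_cast at hstep
    calc _ = |(dyadicSlope f a b (m + w) (i * 2 ^ w + t) - s) * h| := by
          rw [sub_mul, ← hstep]; ring_nf
      _ ≤ η * h := by
          rw [abs_mul, abs_of_pos (by positivity : 0 < h)]
          exact mul_le_mul_of_nonneg_right (hstable t ht) (by positivity)

theorem exists_mul_dyadicEnergy_sub_le {a b : ℝ} (hab : a < b) {K : ℝ}
    (hf : ∀ x ∈ Icc a b, ∀ y ∈ Icc a b, |f x - f y| ≤ K * |x - y|) {W : ℕ} (hW : 0 < W)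
    (w : ℕ) :
    ∃ k < W, W * (dyadicEnergy f a b (k * w + w) - dyadicEnergy f a b (k * w)) ≤ K ^ 2 := by
  have htel := sum_range_sub (fun k ↦ dyadicEnergy f a b (k * w)) W
  obtain ⟨k, hk, hle⟩ := exists_le_of_sum_le (nonempty_range_iff.2 hW.ne')
    (f := fun k ↦ dyadicEnergy f a b ((k + 1) * w) - dyadicEnergy f a b (k * w))
    (g := fun _ ↦ K ^ 2 / W) (by
      rw [htel, sum_const, card_range, nsmul_eq_mul, mul_div_cancel₀ _ (by positivity)]
      linarith [dyadicEnergy_le f hab hf (W * w), dyadicEnergy_nonneg f a b (0 * w)])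
  refine ⟨k, mem_range.1 hk, ?_⟩
  rw [← add_one_mul, mul_comm, ← le_div_iff₀ (by positivity)]
  exact hle

theorem exists_enum_dyadicIntervals {a b : ℝ} (hab : a < b) {m : ℕ} {G : Finset ℕ}
    (hG : G ⊆ range (2 ^ m)) :
    ∃ c e : ℕ → ℝ,
      (∀ j < #G, a ≤ c j ∧ c j < e j ∧ e j ≤ b) ∧
      (∀ i < #G, ∀ j < #G, i ≠ j → e i ≤ c j ∨ e j ≤ c i) ∧
      (∀ j < #G, ∃ i ∈ G, c j = dyadicPt a b m i ∧ e j = dyadicPt a b m (i + 1)) ∧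
      ∑ j ∈ range #G, (e j - c j) = #G * ((b - a) / 2 ^ m) := by
  set φ : ℕ → ℕ := fun j ↦ if h : j < #G then G.orderEmbOfFin rfl ⟨j, h⟩ else 0
  have hφG : ∀ j < #G, φ j ∈ G := fun j hj ↦ by
    simp only [φ, dif_pos hj]; exact orderEmbOfFin_mem _ _ _
  have hφ : ∀ i < #G, ∀ j < #G, i < j → φ i < φ j := fun i hi j hj hij ↦ by
    simp only [φ, dif_pos hi, dif_pos hj]; exact (G.orderEmbOfFin rfl).strictMono hij
  have hmono := dyadicPt_strictMono hab m
  refine ⟨fun j ↦ dyadicPt a b m (φ j), fun j ↦ dyadicPt a b m (φ j + 1), fun j hj ↦ ?_,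
    fun i hi j hj hij ↦ ?_, fun j hj ↦ ⟨φ j, hφG j hj, rfl, rfl⟩, ?_⟩
  · have hφm := mem_range.1 (hG (hφG j hj))
    exact ⟨(dyadicPt_mem_Icc hab.le hφm.le).1, hmono (Nat.lt_succ_self _),
      (dyadicPt_mem_Icc hab.le hφm).2⟩
  · rcases hij.lt_or_gt with h | h
    · exact .inl (hmono.monotone (hφ i hi j hj h))
    · exact .inr (hmono.monotone (hφ j hj i hi h))
  · simp only [dyadicPt_succ_sub, sum_const, card_range, nsmul_eq_mul]

theorem exists_scale_card_not_slopesStable_le {a b : ℝ} (hab : a < b) {K η : ℝ} (hη : 0 ≤ η)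
    (hf : ∀ x ∈ Icc a b, ∀ y ∈ Icc a b, |f x - f y| ≤ K * |x - y|) {W : ℕ} (hW : 0 < W)
    (w : ℕ) :
    ∃ k < W, ∀ B ⊆ range (2 ^ (k * w)), (∀ i ∈ B, ¬ SlopesStable f a b η (k * w) w i) →
      #B * η ^ 2 * W ≤ 2 ^ (k * w) * 2 ^ w * K ^ 2 := by
  obtain ⟨k, hk, henergy⟩ := exists_mul_dyadicEnergy_sub_le f hab hf hW w
  refine ⟨k, hk, fun B hB hbad ↦ ?_⟩
  calc #B * η ^ 2 * W
      ≤ 2 ^ (k * w + w) * (dyadicEnergy f a b (k * w + w) - dyadicEnergy f a b (k * w)) * W := by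
        exact mul_le_mul_of_nonneg_right
          (card_mul_sq_le_of_not_slopesStable f hab.ne hη hB hbad) (Nat.cast_nonneg _)
    _ = 2 ^ (k * w) * 2 ^ w *
          (W * (dyadicEnergy f a b (k * w + w) - dyadicEnergy f a b (k * w))) := by
        rw [pow_add]; ring
    _ ≤ 2 ^ (k * w) * 2 ^ w * K ^ 2 := by gcongr

theorem exists_intervals_of_card_not_slopesStable_le {a b : ℝ} (hab : a < b) {K η ρ : ℝ}
    (hf : ∀ x ∈ Icc a b, ∀ y ∈ Icc a b, |f x - f y| ≤ K * |x - y|) {m w : ℕ}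
    (hcard : ∀ B ⊆ range (2 ^ m), (∀ i ∈ B, ¬ SlopesStable f a b η m w i) → #B ≤ ρ * 2 ^ m) :
    ∃ (M : ℕ) (c e : ℕ → ℝ),
      (∀ j < M, a ≤ c j ∧ c j < e j ∧ e j ≤ b) ∧
      (∀ i < M, ∀ j < M, i ≠ j → e i ≤ c j ∨ e j ≤ c i) ∧
      (∀ j < M, ∀ x ∈ Icc (c j) (e j),
        |f x - (f (c j) + (f (e j) - f (c j)) / (e j - c j) * (x - c j))| ≤
          (η + 2 * K / 2 ^ w) * (e j - c j)) ∧
      (∀ j < M, e j - c j = (b - a) / 2 ^ m) ∧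
      (b - a) - ∑ j ∈ range M, (e j - c j) ≤ ρ * (b - a) := by
  classical
  set G := (range (2 ^ m)).filter (SlopesStable f a b η m w)
  set B := (range (2 ^ m)).filter (fun i ↦ ¬ SlopesStable f a b η m w i)
  have hGB : (#G : ℝ) + #B = 2 ^ m := by
    have := card_filter_add_card_filter_not (s := range (2 ^ m)) (SlopesStable f a b η m w)
    rw [card_range] at this
    exact_mod_cast this
  have hB := hcard B (filter_subset _ _) fun i hi ↦ (mem_filter.1 hi).2
  obtain ⟨c, e, hce, hdisj, hdyadic, hsum⟩ :=
    exists_enum_dyadicIntervals hab (filter_subset _ _ : G ⊆ _)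
  have hlen : ∀ j < #G, e j - c j = (b - a) / 2 ^ m := fun j hj ↦ by
    obtain ⟨i, -, hc, he⟩ := hdyadic j hj
    rw [hc, he, dyadicPt_succ_sub]
  refine ⟨#G, c, e, hce, hdisj, fun j hj x hx ↦ ?_, hlen, ?_⟩
  · obtain ⟨i, hiG, hc, he⟩ := hdyadic j hj
    rw [mem_filter, Finset.mem_range] at hiG
    rw [← slope_def_field, hlen j hj]
    rw [hc, he] at hx ⊢
    exact abs_sub_dyadicSlope_line_le f hab hf hiG.1 hiG.2 x hx
  · have hh : 0 < (b - a) / 2 ^ m := div_pos (by linarith) (by positivity)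
    rw [hsum]
    calc b - a - #G * ((b - a) / 2 ^ m) = #B * ((b - a) / 2 ^ m) := by
          rw [show (#G : ℝ) = 2 ^ m - #B by linarith]; field_simp; ring
      _ ≤ ρ * 2 ^ m * ((b - a) / 2 ^ m) := by gcongr
      _ = ρ * (b - a) := by field_simp

end

/-- for every `d ∈ ℕ` and `ε > 0` there is `τ = τ(ε,d) > 0` such that any
`d`-Lipschitz `f : [a,b] → ℝ` admits a family of non-overlapping subintervals
`[c_j,d_j]` on each of which `f` is `ε`-linear, each of length `≥ τ(b−a)`, leaving at
most length `ε(b−a)` of `[a,b]` uncovered. -/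
theorem stmt14 (d : ℕ) (ε : ℝ) (hε : 0 < ε) :
    ∃ τ : ℝ, 0 < τ ∧
    ∀ (a b : ℝ) (f : ℝ → ℝ), a < b →
      (∀ x ∈ Set.Icc a b, ∀ y ∈ Set.Icc a b, |f x - f y| ≤ (d : ℝ) * |x - y|) →
      ∃ (M : ℕ) (c e : ℕ → ℝ),
        (∀ j < M, a ≤ c j ∧ c j < e j ∧ e j ≤ b) ∧
        (∀ i < M, ∀ j < M, i ≠ j → e i ≤ c j ∨ e j ≤ c i) ∧
        (∀ j < M, ∀ x ∈ Set.Icc (c j) (e j),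
          |f x - (f (c j) + (f (e j) - f (c j)) / (e j - c j) * (x - c j))| ≤
            ε * (e j - c j)) ∧
        (∀ j < M, τ * (b - a) ≤ e j - c j) ∧
        ((b - a) - ∑ j ∈ Finset.range M, (e j - c j) ≤ ε * (b - a)) := by
  obtain ⟨w, hw⟩ : ∃ w : ℕ, 4 * d / ε < 2 ^ w := pow_unbounded_of_one_lt _ one_lt_two
  obtain ⟨W, hW⟩ : ∃ W : ℕ, 4 * d ^ 2 * 2 ^ w / ε ^ 3 < W := exists_nat_gt _
  have hW0 : 0 < W := by exact_mod_cast (by positivity : (0 : ℝ) ≤ _).trans_lt hW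
  rw [div_lt_iff₀ hε] at hw
  rw [div_lt_iff₀ (by positivity)] at hW
  refine ⟨1 / 2 ^ (W * w), by positivity, fun a b f hab hf ↦ ?_⟩
  obtain ⟨k, hk, hcount⟩ :=
    exists_scale_card_not_slopesStable_le f hab (by positivity : 0 ≤ ε / 2) hf hW0 w
  obtain ⟨M, c, e, hce, hdisj, hlin, hlen, hcover⟩ :=
    exists_intervals_of_card_not_slopesStable_le f hab hf (ρ := ε) fun B hB hbad ↦ by
      have hBW := hcount B hB hbad
      have hWε : 2 ^ (k * w) * (4 * d ^ 2 * 2 ^ w) ≤ 2 ^ (k * w) * (W * ε ^ 3) := by gcongr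
      refine le_of_mul_le_mul_right ?_ (by positivity : (0 : ℝ) < ε ^ 2 * W)
      nlinarith
  have hslack : ε / 2 + 2 * d / 2 ^ w ≤ ε := by
    rw [← le_sub_iff_add_le', div_le_iff₀ (by positivity)]; linarith
  refine ⟨M, c, e, hce, hdisj, fun j hj x hx ↦ (hlin j hj x hx).trans ?_, fun j hj ↦ ?_, hcover⟩
  · exact mul_le_mul_of_nonneg_right hslack (sub_nonneg.2 (hce j hj).2.1.le)
  · rw [hlen j hj, one_div_mul_eq_div]
    exact div_le_div_of_nonneg_left (by linarith) (by positivity)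
      (pow_le_pow_right₀ one_le_two (Nat.mul_le_mul_right w hk.le))
end

section
/- For every d ∈ ℕ and ε > 0 there is τ = τ(d,ε) > 0 such that: for any non-decreasing d-Lipschitz function f : [0,m] → ℝ with f(0) = 0 there exist sequences 0 = a₀ < a₁ < ... < a_n ≤ m and 0 ≤ σ₀ < σ₁ < ... < σ_{n−1} ≤ d such that (i) a_{j+1} − a_j ≥ τm for all j; (ii) f(x) ≥ f(a_j) + σ_j (x − a_j) for all x ∈ [a_j, a_{j+1}] and each j; (iii) Σ_{j=0}^{n−1} (a_{j+1} − a_j) σ_j ≥ f(m) − εm. -/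
/-!
Quantize the slopes to multiples of `δ`. If `f` is `(s, 0)`-superlinear on `[a, m]`, let `z` be
the last point of `[a, m]` at which `f` lies on or below the line of slope `s + δ` through
`(a, f a)`; then `f` is `(s + δ, 0)`-superlinear on `[z, m]`, and we recurse from `z`, obtaining a
staircase that starts at some `b ≥ z`. The piece `[a, b]` is kept with slope `s` when it has
length at least `τ m`; as `f z - f a ≤ (s + δ) (z - a)`, this loses at most `δ (z - a)`. Otherwise
it is dropped, and as `z - a < τ m` this costs at most `d τ m`. A slope above `d` is impossible on
a nondegenerate piece, so the recursion stops after `d / δ` levels, and the total loss is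
`δ m + O(d² τ m / δ)`.
-/

open Set
open scoped NNReal

/-- The paper's `(σ, 0)`-superlinearity of `f` on `[a, b]`. -/
def SuperlinearOn (f : ℝ → ℝ) (σ a b : ℝ) : Prop :=
  ∀ x ∈ Icc a b, f a + σ * (x - a) ≤ f x

def seqCons {α : Type*} (x : α) (a : ℕ → α) : ℕ → α
  | 0 => x
  | j + 1 => a j

structure IsStaircase (f : ℝ → ℝ) (g m : ℝ) (n : ℕ) (a σ : ℕ → ℝ) : Prop where
  last_le : a n ≤ m
  gap_le : ∀ j < n, g ≤ a (j + 1) - a j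
  slope_lt : ∀ j, j + 1 < n → σ j < σ (j + 1)
  superlinearOn : ∀ j < n, SuperlinearOn f (σ j) (a j) (a (j + 1))

lemma LipschitzOnWith.sub_le_mul_sub {f : ℝ → ℝ} {L : ℝ≥0} {s : Set ℝ}
    (hf : LipschitzOnWith L f s) {x y : ℝ} (hx : x ∈ s) (hy : y ∈ s) (hxy : x ≤ y) :
    f y - f x ≤ L * (y - x) := by
  have := hf.le_add_mul hy hx
  rw [Real.dist_eq, abs_of_nonneg (sub_nonneg.2 hxy)] at this
  linarith

namespace SuperlinearOn

variable {f : ℝ → ℝ} {σ a b : ℝ}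

lemma mono_right (h : SuperlinearOn f σ a b) {c : ℝ} (hcb : c ≤ b) : SuperlinearOn f σ a c :=
  fun x hx => h x ⟨hx.1, hx.2.trans hcb⟩

lemma le_of_sub_le (h : SuperlinearOn f σ a b) (hab : a < b) {L : ℝ}
    (hL : f b - f a ≤ L * (b - a)) : σ ≤ L := by
  have := h b ⟨hab.le, le_rfl⟩
  exact le_of_mul_le_mul_right (by linarith) (sub_pos.2 hab)

lemma zero_of_monotoneOn (hf : MonotoneOn f (Icc a b)) : SuperlinearOn f 0 a b :=
  fun x hx => by simpa using hf ⟨le_rfl, hx.1.trans hx.2⟩ hx hx.1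

end SuperlinearOn

/-- `z` is the last point of `[a, m]` on or below the line of slope `s` through `(a, f a)`. -/
lemma exists_le_line_superlinearOn {f : ℝ → ℝ} {a m : ℝ} (hf : ContinuousOn f (Icc a m))
    (ham : a ≤ m) (s : ℝ) :
    ∃ z ∈ Icc a m, f z ≤ f a + s * (z - a) ∧ SuperlinearOn f s z m := by
  set S := {x ∈ Icc a m | f x ≤ f a + s * (x - a)}
  have hS : IsCompact S :=
    isCompact_Icc.of_isClosed_subset (isClosed_Icc.isClosed_le hf (by fun_prop)) (sep_subset _ _)
  obtain ⟨z, ⟨hz, hfz⟩, hmax⟩ := hS.exists_isGreatest ⟨a, ⟨le_rfl, ham⟩, by simp⟩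
  refine ⟨z, hz, hfz, fun x hx => ?_⟩
  rcases hx.1.eq_or_lt with rfl | hzx
  · simp
  · have : f a + s * (x - a) < f x :=
      not_le.1 fun h => (hmax ⟨⟨hz.1.trans hzx.le, hx.2⟩, h⟩).not_gt hzx
    linarith

namespace IsStaircase

variable {f : ℝ → ℝ} {g m : ℝ} {n : ℕ} {a σ : ℕ → ℝ}

lemma nil {b : ℝ} (hb : b ≤ m) (σ : ℕ → ℝ) : IsStaircase f g m 0 (fun _ => b) σ where
  last_le := hb
  gap_le := by simp
  slope_lt := by simp
  superlinearOn := by simp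

lemma cons (h : IsStaircase f g m n a σ) {x s : ℝ} (hgap : g ≤ a 0 - x) (hs : 0 < n → s < σ 0)
    (hsup : SuperlinearOn f s x (a 0)) :
    IsStaircase f g m (n + 1) (seqCons x a) (seqCons s σ) where
  last_le := h.last_le
  gap_le j hj := by
    cases j with
    | zero => exact hgap
    | succ j => exact h.gap_le j (by omega)
  slope_lt j hj := by
    cases j with
    | zero => exact hs (by omega)
    | succ j => exact h.slope_lt j (by omega)
  superlinearOn j hj := by
    cases j with
    | zero => exact hsup
    | succ j => exact h.superlinearOn j (by omega)

lemma monotoneOn (h : IsStaircase f g m n a σ) (hg : 0 ≤ g) : MonotoneOn a (Iic n) :=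
  monotoneOn_of_le_succ ordConnected_Iic fun j _ _ hj => by
    simp only [Order.succ_eq_add_one, mem_Iic] at hj ⊢
    linarith [h.gap_le j (by omega)]

lemma slope_le (h : IsStaircase f g m n a σ) (hg : 0 < g) (h0 : 0 ≤ a 0) {L : ℝ≥0}
    (hf : LipschitzOnWith L f (Icc 0 m)) (j : ℕ) (hj : j < n) : σ j ≤ L := by
  have hmono := h.monotoneOn hg.le
  have hmem : ∀ i ≤ n, a i ∈ Icc 0 m := fun i hi =>
    ⟨h0.trans (hmono (by simp) hi (Nat.zero_le i)), (hmono hi (mem_Iic.2 le_rfl) hi).trans h.last_le⟩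
  exact (h.superlinearOn j hj).le_of_sub_le (by linarith [h.gap_le j hj])
    (hf.sub_le_mul_sub (hmem j hj.le) (hmem (j + 1) hj) (by linarith [h.gap_le j hj]))

end IsStaircase

section Construction

variable {f : ℝ → ℝ} {L : ℝ≥0} {m g δ : ℝ}

lemma sum_range_succ_seqCons (n : ℕ) (x s : ℝ) (a σ : ℕ → ℝ) :
    ∑ j ∈ Finset.range (n + 1), (seqCons x a (j + 1) - seqCons x a j) * seqCons s σ j =
      (a 0 - x) * s + ∑ j ∈ Finset.range n, (a (j + 1) - a j) * σ j := by
  rw [Finset.sum_range_succ', add_comm]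
  rfl

theorem exists_staircase_of_superlinearOn (hf : LipschitzOnWith L f (Icc 0 m)) (hg : 0 ≤ g)
    (hδ : 0 < δ) (t : ℕ) {s a : ℝ} (hs : 0 ≤ s) (hLs : (L : ℝ) < s + t * δ) (ha : a ∈ Icc 0 m)
    (hsup : SuperlinearOn f s a m) :
    ∃ n A σ, IsStaircase f g m n A σ ∧ A 0 ∈ Icc a m ∧ (∀ j < n, s ≤ σ j) ∧
      f m - f a - δ * (m - a) - t * L * g ≤
        ∑ j ∈ Finset.range n, (A (j + 1) - A j) * σ j := by
  induction t generalizing s a with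
  | zero =>
    have ham : a = m := by
      by_contra hne
      have := hsup.le_of_sub_le (lt_of_le_of_ne ha.2 hne)
        (hf.sub_le_mul_sub ha (right_mem_Icc.2 (ha.1.trans ha.2)) ha.2)
      simp only [CharP.cast_eq_zero, zero_mul, add_zero] at hLs
      linarith
    exact ⟨0, fun _ => a, fun _ => s, .nil ha.2 _, ⟨le_rfl, ha.2⟩, by simp, by simp [ham]⟩
  | succ t ih =>
    obtain ⟨z, hz, hfz, hsupz⟩ :=
      exists_le_line_superlinearOn (hf.continuousOn.mono (Icc_subset_Icc_left ha.1)) ha.2 (s + δ)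
    have hz₀ : z ∈ Icc 0 m := ⟨ha.1.trans hz.1, hz.2⟩
    obtain ⟨n, A, σ, hA, hA0, hσ, hsum⟩ :=
      ih (by positivity) (by push_cast at hLs; linarith) hz₀ hsupz
    push_cast
    by_cases hgap : g ≤ A 0 - a
    · refine ⟨n + 1, seqCons a A, seqCons s σ,
        hA.cons hgap (fun hn => by linarith [hσ 0 hn]) (hsup.mono_right hA0.2),
        ⟨le_rfl, ha.2⟩, ?_, ?_⟩
      · rintro (_ | j) hj
        exacts [le_rfl, le_of_add_le_of_nonneg_left (hσ j (by omega)) hδ.le]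
      · rw [sum_range_succ_seqCons]
        have : 0 ≤ s * (A 0 - z) := mul_nonneg hs (by linarith [hA0.1])
        have : 0 ≤ (L : ℝ) * g := by positivity
        linarith
    · have hza : f z - f a ≤ L * (z - a) := hf.sub_le_mul_sub ha hz₀ hz.1
      have : (L : ℝ) * (z - a) ≤ L * g := by gcongr; linarith [hA0.1]
      have : 0 ≤ δ * (z - a) := mul_nonneg hδ.le (by linarith [hz.1])
      refine ⟨n, A, σ, hA, ⟨hz.1.trans hA0.1, hA0.2⟩, fun j hj => by linarith [hσ j hj], ?_⟩
      linarith

/-- Starting the recursion at `g` rather than at `0` makes room for a first piece `[0, b]` of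
slope `0`, on which `f` is superlinear by monotonicity. -/
theorem exists_staircase_of_monotoneOn (hf : LipschitzOnWith L f (Icc 0 m))
    (hmono : MonotoneOn f (Icc 0 m)) (hg : 0 ≤ g) (hgm : g ≤ m) (hδ : 0 < δ) {K : ℕ}
    (hK : (L : ℝ) < (K + 1) * δ) :
    ∃ n A σ, IsStaircase f g m n A σ ∧ A 0 = 0 ∧ (∀ j < n, 0 ≤ σ j) ∧
      f m - f 0 - δ * m - (K + 1) * L * g ≤ ∑ j ∈ Finset.range n, (A (j + 1) - A j) * σ j := by
  have hg₀ : g ∈ Icc 0 m := ⟨hg, hgm⟩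
  obtain ⟨z, hz, hfz, hsupz⟩ :=
    exists_le_line_superlinearOn (hf.continuousOn.mono (Icc_subset_Icc_left hg)) hgm δ
  obtain ⟨n, A, σ, hA, hA0, hσ, hsum⟩ := exists_staircase_of_superlinearOn hf hg hδ K hδ.le
    (by linarith) ⟨hg.trans hz.1, hz.2⟩ hsupz
  have hfg : f g - f 0 ≤ L * (g - 0) := hf.sub_le_mul_sub (left_mem_Icc.2 (hg.trans hgm)) hg₀ hg
  refine ⟨n + 1, seqCons 0 A, seqCons 0 σ, hA.cons (by linarith [hz.1, hA0.1])
    (fun hn => hδ.trans_le (hσ 0 hn))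
    (.zero_of_monotoneOn (hmono.mono (Icc_subset_Icc_right hA0.2))), rfl, ?_, ?_⟩
  · rintro (_ | j) hj
    exacts [le_rfl, hδ.le.trans (hσ j (by omega) : δ ≤ σ j)]
  · rw [sum_range_succ_seqCons]
    have : 0 ≤ δ * g := mul_nonneg hδ.le hg
    linarith

end Construction

theorem stmt17_general (d : ℕ) (ε : ℝ) (hε : 0 < ε) :
    ∃ τ : ℝ, 0 < τ ∧
    ∀ (m : ℝ) (f : ℝ → ℝ), 0 < m →
      MonotoneOn f (Set.Icc 0 m) →
      (∀ x ∈ Set.Icc (0:ℝ) m, ∀ y ∈ Set.Icc (0:ℝ) m, |f x - f y| ≤ (d : ℝ) * |x - y|) →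
      f 0 = 0 →
      ∃ (n : ℕ) (a σ : ℕ → ℝ),
        a 0 = 0 ∧ a n ≤ m ∧
        (∀ j < n, a j < a (j + 1)) ∧
        (∀ j < n, 0 ≤ σ j) ∧
        (∀ j < n, σ j ≤ (d : ℝ)) ∧
        (∀ j, j + 1 < n → σ j < σ (j + 1)) ∧
        (∀ j < n, τ * m ≤ a (j + 1) - a j) ∧
        (∀ j < n, ∀ x ∈ Set.Icc (a j) (a (j + 1)), f (a j) + σ j * (x - a j) ≤ f x) ∧
        (f m - ε * m ≤ ∑ j ∈ Finset.range n, (a (j + 1) - a j) * σ j) := by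
  set K := ⌊(d : ℝ) / (ε / 2)⌋₊
  have hK : (d : ℝ) < (K + 1) * (ε / 2) :=
    (div_lt_iff₀ (by positivity)).1 (Nat.lt_floor_add_one _)
  set τ := min 1 (ε / (2 * (d + 1) * (K + 1)))
  have hτε : τ * (2 * (d + 1) * (K + 1)) ≤ ε := (le_div_iff₀ (by positivity)).1 (min_le_right _ _)
  refine ⟨τ, by positivity, fun m f hm hmono hlip hf0 => ?_⟩
  have hf : LipschitzOnWith d f (Icc 0 m) := .of_dist_le_mul fun x hx y hy => by
    simpa [Real.dist_eq] using hlip x hx y hy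
  have hg : 0 < τ * m := by positivity
  obtain ⟨n, a, σ, ha, ha0, hσ, hsum⟩ := exists_staircase_of_monotoneOn hf hmono hg.le
    (mul_le_of_le_one_left hm.le (min_le_left _ _)) (half_pos hε) (by simpa using hK)
  have herr : (K + 1) * d * (τ * m) ≤ ε / 2 * m := by nlinarith
  refine ⟨n, a, σ, ha0, ha.last_le, fun j hj => by linarith [ha.gap_le j hj], hσ,
    fun j hj => by simpa using ha.slope_le hg ha0.ge hf j hj, ha.slope_lt, ha.gap_le,
    ha.superlinearOn, ?_⟩
  push_cast at hsum
  linarith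

/-- for every `d ∈ ℕ`, `ε > 0` there is `τ(d,ε) > 0` such that every
non-decreasing `d`-Lipschitz `f : [0,m] → ℝ` with `f(0)=0` admits
`0 = a₀ < a₁ < ⋯ < a_n ≤ m` and `0 ≤ σ₀ < ⋯ < σ_{n−1} ≤ d` with:
`a_{j+1} − a_j ≥ τm`; `f` is `(σ_j,0)`-superlinear on `[a_j,a_{j+1}]`; and
`Σ (a_{j+1}−a_j)σ_j ≥ f(m) − εm`. -/
theorem stmt17 (d : ℕ) (hd : 1 ≤ d) (ε : ℝ) (hε : 0 < ε) :
    ∃ τ : ℝ, 0 < τ ∧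
    ∀ (m : ℝ) (f : ℝ → ℝ), 0 < m →
      MonotoneOn f (Set.Icc 0 m) →
      (∀ x ∈ Set.Icc (0:ℝ) m, ∀ y ∈ Set.Icc (0:ℝ) m, |f x - f y| ≤ (d : ℝ) * |x - y|) →
      f 0 = 0 →
      ∃ (n : ℕ) (a σ : ℕ → ℝ),
        a 0 = 0 ∧ a n ≤ m ∧
        (∀ j < n, a j < a (j + 1)) ∧
        (∀ j < n, 0 ≤ σ j) ∧
        (∀ j < n, σ j ≤ (d : ℝ)) ∧
        (∀ j, j + 1 < n → σ j < σ (j + 1)) ∧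
        (∀ j < n, τ * m ≤ a (j + 1) - a j) ∧
        (∀ j < n, ∀ x ∈ Set.Icc (a j) (a (j + 1)), f (a j) + σ j * (x - a j) ≤ f x) ∧
        (f m - ε * m ≤ ∑ j ∈ Finset.range n, (a (j + 1) - a j) * σ j) :=
  stmt17_general d ε hε
end

section
/- Let A, B₁, ..., B_n ⊂ ℝ be finite sets and δ > 0. Assume |A + B_i|_δ ≤ K_i |A|_δ for all i = 1,...,n. Then there is a subset A' ⊂ A with |A'|_δ ≥ |A|_δ/2 such that |A' + B₁ + ... + B_n|_δ ≲_n K₁ ⋯ K_n · |A|_δ. -/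
/-!
Rounding `x ↦ ⌊x / δ⌋` turns δ-covering numbers of finite sets of reals into cardinalities of
finite sets of integers, and is additive up to a carry in `{0, …, m}` on a sum of `m + 1` terms.
It therefore suffices to prove the statement for finite subsets of an abelian group, at the cost
of constant factors.

There, the summands are merged into one set of `G × ℤ^ι` made of `c i ≈ ∏_{j ≠ i} K j`
disjoint copies of `B i`. Petridis's lemma for this set gives a nonempty `X ⊆ A` with
`|C + X + B i| ≤ 2 n K i |C + X|` for every `C`, and adding the `B i` one at a time gives
`|X + B₁ + ⋯ + Bₙ| ≤ ∏ (2 n K i) |X|`. Removing such sets `X` from `A` greedily, as long as more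
than half of `A` remains, produces `A'`.
-/

open Pointwise

open Finset

theorem exists_subset_pluennecke_petridis {G : Type*} [AddGroup G] [DecidableEq G]
    {A : Finset G} (hA : A.Nonempty) (B : Finset G) :
    ∃ X ⊆ A, X.Nonempty ∧ #(X + B) * #A ≤ #(A + B) * #X ∧
      ∀ C : Finset G, #(C + X + B) * #X ≤ #(X + B) * #(C + X) := by
  obtain ⟨X, hX, hmin⟩ := (A.powerset.filter (·.Nonempty)).exists_min_image
    (fun Z => (#(Z + B) : ℚ) / #Z) ⟨A, by simp [hA]⟩
  simp only [mem_filter, mem_powerset, and_imp] at hX hmin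
  have hle : ∀ Y ⊆ A, Y.Nonempty → #(X + B) * #Y ≤ #(Y + B) * #X := by
    intro Y hYA hY
    have h := hmin Y hYA hY
    rw [div_le_div_iff₀ (by exact_mod_cast hX.2.card_pos) (by exact_mod_cast hY.card_pos)] at h
    exact_mod_cast h
  refine ⟨X, hX.1, hX.2, hle A subset_rfl hA, fun C =>
    pluennecke_petridis_inequality_add C fun Y hYX => ?_⟩
  rcases Y.eq_empty_or_nonempty with rfl | hY
  · simp
  · exact hle Y (hYX.trans hX.1) hY

section WeightedLift

variable {G ι : Type*} [AddCommGroup G] [DecidableEq G] [Fintype ι] [DecidableEq ι]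

noncomputable def weightedLift (B : ι → Finset G) (c : ι → ℕ) : Finset (G × (ι → ℤ)) :=
  univ.biUnion fun i => B i ×ˢ (Icc (1 : ℤ) (c i)).image (Pi.single i)

theorem image_inl_add_weightedLift (Z : Finset G) (B : ι → Finset G) (c : ι → ℕ) :
    Z.image (AddMonoidHom.inl G (ι → ℤ)) + weightedLift B c =
      univ.biUnion fun i => (Z + B i) ×ˢ (Icc (1 : ℤ) (c i)).image (Pi.single i) := by
  ext ⟨g, v⟩
  simp only [weightedLift, mem_add, mem_image, mem_biUnion, mem_univ, true_and, mem_product,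
    AddMonoidHom.inl_apply, Prod.exists, Prod.mk_add_mk, Prod.mk.injEq]
  constructor
  · rintro ⟨_, _, ⟨z, hz, rfl, rfl⟩, b, w, ⟨i, hb, hw⟩, rfl, rfl⟩
    exact ⟨i, ⟨z, hz, b, hb, rfl⟩, by simpa using hw⟩
  · rintro ⟨i, ⟨z, hz, b, hb, rfl⟩, hv⟩
    exact ⟨z, 0, ⟨z, hz, rfl, rfl⟩, b, v, ⟨i, hb, hv⟩, rfl, zero_add v⟩

theorem card_image_inl_add_weightedLift (Z : Finset G) (B : ι → Finset G) (c : ι → ℕ) :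
    #(Z.image (AddMonoidHom.inl G (ι → ℤ)) + weightedLift B c) = ∑ i, c i * #(Z + B i) := by
  rw [image_inl_add_weightedLift, card_biUnion]
  · refine sum_congr rfl fun i _ => ?_
    rw [card_product, card_image_of_injective _ (Pi.single_injective i), Int.card_Icc]
    simp [mul_comm]
  · intro i _ j _ hij
    refine disjoint_product.2 (Or.inr (disjoint_left.2 ?_))
    simp only [mem_image, mem_Icc, not_exists, not_and]
    rintro _ ⟨a, ⟨ha, -⟩, rfl⟩ b - hab
    have := congr_fun hab i
    rw [Pi.single_eq_same, Pi.single_eq_of_ne hij] at this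
    omega

theorem exists_subset_weighted_pluennecke_petridis {A : Finset G} (hA : A.Nonempty)
    (B : ι → Finset G) (c : ι → ℕ) :
    ∃ X ⊆ A, X.Nonempty ∧
      (∑ i, c i * #(X + B i)) * #A ≤ (∑ i, c i * #(A + B i)) * #X ∧
      ∀ C : Finset G,
        (∑ i, c i * #(C + X + B i)) * #X ≤ (∑ i, c i * #(X + B i)) * #(C + X) := by
  have he : Function.Injective (AddMonoidHom.inl G (ι → ℤ)) :=
    fun _ _ h => congr_arg Prod.fst h
  obtain ⟨X', hX'A, hX', hX'_card, hX'C⟩ :=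
    exists_subset_pluennecke_petridis (hA.image (AddMonoidHom.inl G (ι → ℤ))) (weightedLift B c)
  obtain ⟨X, hXA, rfl⟩ := subset_image_iff.1 hX'A
  refine ⟨X, hXA, hX'.of_image, ?_, fun C => ?_⟩
  · simpa only [card_image_inl_add_weightedLift, card_image_of_injective _ he] using hX'_card
  · simpa only [← image_add (AddMonoidHom.inl G (ι → ℤ)), card_image_inl_add_weightedLift,
      card_image_of_injective _ he] using hX'C (C.image (AddMonoidHom.inl G (ι → ℤ)))

end WeightedLift

section DifferentSummands

variable {G ι : Type*} [AddCommGroup G] [DecidableEq G]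

theorem card_add_sum_le_prod_mul {X : Finset G} {B : ι → Finset G} {L : ι → ℝ}
    (hL : ∀ i, 0 ≤ L i) (hXB : ∀ i C, (#(C + X + B i) : ℝ) ≤ L i * #(C + X)) (s : Finset ι) :
    (#(X + ∑ i ∈ s, B i) : ℝ) ≤ (∏ i ∈ s, L i) * #X := by
  classical
  induction s using Finset.induction_on with
  | empty => simp
  | insert j s hj ih =>
    calc (#(X + ∑ i ∈ insert j s, B i) : ℝ)
        = #((∑ i ∈ s, B i) + X + B j) := by
          rw [sum_insert hj, add_comm (B j), ← add_assoc, add_comm X]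
      _ ≤ L j * #((∑ i ∈ s, B i) + X) := hXB j _
      _ ≤ L j * ((∏ i ∈ s, L i) * #X) := by rw [add_comm]; gcongr; exact hL j
      _ = (∏ i ∈ insert j s, L i) * #X := by rw [prod_insert hj, mul_assoc]

theorem exists_nat_weights_mul_near_prod [Fintype ι] {K : ι → ℝ} (hK : ∀ i, 1 ≤ K i) :
    ∃ c : ι → ℕ, ∀ i, 0 < c i ∧ ∏ j, K j ≤ c i * K i ∧ c i * K i ≤ 2 * ∏ j, K j := by
  classical
  refine ⟨fun i => ⌈(∏ j ∈ univ.erase i, K j : ℝ)⌉₊, fun i => ?_⟩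
  have hKi : 0 ≤ K i := zero_le_one.trans (hK i)
  have hprod : 1 ≤ ∏ j ∈ univ.erase i, K j := one_le_prod fun j _ => hK j
  rw [← prod_erase_mul _ _ (mem_univ i), ← mul_assoc]
  refine ⟨Nat.ceil_pos.2 (by linarith), by gcongr; exact Nat.le_ceil _,
    by gcongr; exact (Nat.ceil_lt_two_mul (by linarith)).le⟩

theorem exists_subset_card_add_sum_le [Fintype ι] {A : Finset G} (hA : A.Nonempty)
    (B : ι → Finset G) {K : ι → ℝ} (hK : ∀ i, 1 ≤ K i)
    (hAB : ∀ i, (#(A + B i) : ℝ) ≤ K i * #A) :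
    ∃ X ⊆ A, X.Nonempty ∧
      (#(X + ∑ i, B i) : ℝ) ≤ (∏ i, (2 * Fintype.card ι * K i)) * #X := by
  classical
  set n : ℝ := (Fintype.card ι : ℝ)
  have hK0 (i) : 0 ≤ K i := zero_le_one.trans (hK i)
  obtain ⟨c, hc⟩ := exists_nat_weights_mul_near_prod hK
  obtain ⟨X, hXA, hX, hXA_card, hXC⟩ := exists_subset_weighted_pluennecke_petridis hA B c
  have hX_sum : ∑ i, (c i * #(X + B i) : ℝ) ≤ 2 * n * (∏ j, K j) * #X := by
    refine le_of_mul_le_mul_right ?_ (by exact_mod_cast hA.card_pos : (0 : ℝ) < #A)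
    calc (∑ i, (c i * #(X + B i) : ℝ)) * #A ≤ (∑ i, (c i * #(A + B i) : ℝ)) * #X := by
          exact_mod_cast hXA_card
      _ ≤ (∑ _i : ι, 2 * (∏ j, K j) * #A) * #X := by
          gcongr ?_ * _
          refine sum_le_sum fun i _ => ?_
          have := hK0 i
          calc (c i * #(A + B i) : ℝ) ≤ c i * K i * #A := by rw [mul_assoc]; gcongr; exact hAB i
            _ ≤ 2 * (∏ j, K j) * #A := by gcongr ?_ * _; exact (hc i).2.2
      _ = 2 * n * (∏ j, K j) * #X * #A := by
          simp only [sum_const, card_univ, nsmul_eq_mul, n]; ring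
  refine ⟨X, hXA, hX, card_add_sum_le_prod_mul (fun i => by have := hK0 i; positivity)
    (fun i C => ?_) univ⟩
  have hci : (0 : ℝ) < c i := by exact_mod_cast (hc i).1
  refine le_of_mul_le_mul_right (a := (c i : ℝ) * #X) ?_ (by positivity)
  calc (#(C + X + B i) : ℝ) * (c i * #X) = (c i * #(C + X + B i)) * #X := by ring
    _ ≤ (∑ j, (c j * #(C + X + B j) : ℝ)) * #X := by
        gcongr
        exact single_le_sum (f := fun j => (c j * #(C + X + B j) : ℝ)) (fun j _ => by positivity)
          (mem_univ i)
    _ ≤ (∑ j, (c j * #(X + B j) : ℝ)) * #(C + X) := by exact_mod_cast hXC C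
    _ ≤ 2 * n * (∏ j, K j) * #X * #(C + X) := by gcongr
    _ ≤ 2 * n * (c i * K i) * #X * #(C + X) := by gcongr; exact (hc i).2.1
    _ = 2 * n * K i * #(C + X) * (c i * #X) := by ring

end DifferentSummands

theorem exists_large_subset_card_add_le {H : Type*} [DecidableEq H] [Add H] {A S : Finset H}
    {M : ℝ} (h : ∀ R ⊆ A, #A < 2 * #R → ∃ X ⊆ R, X.Nonempty ∧ (#(X + S) : ℝ) ≤ M * #X) :
    ∃ A' ⊆ A, #A ≤ 2 * #A' ∧ (#(A' + S) : ℝ) ≤ M * #A' := by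
  suffices key : ∀ R ⊆ A, ∃ P ⊆ R, 2 * #(R \ P) ≤ #A ∧ (#(P + S) : ℝ) ≤ M * #P by
    obtain ⟨P, hPA, hhalf, hP⟩ := key A subset_rfl
    have := card_sdiff_add_card_eq_card hPA
    exact ⟨P, hPA, by omega, hP⟩
  intro R
  induction R using Finset.strongInduction with
  | H R ih =>
  intro hRA
  by_cases hR : 2 * #R ≤ #A
  · exact ⟨∅, empty_subset R, by simpa using hR, by simp⟩
  obtain ⟨X, hXR, hX, hXS⟩ := h R hRA (by omega)
  obtain ⟨P, hPR, hhalf, hPS⟩ :=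
    ih (R \ X) (sdiff_ssubset hXR hX) (sdiff_subset.trans hRA)
  have hPX : Disjoint P X := disjoint_of_subset_left hPR sdiff_disjoint
  refine ⟨P ∪ X, union_subset (hPR.trans sdiff_subset) hXR, ?_, ?_⟩
  · rwa [sdiff_sdiff_left, sup_eq_union, union_comm] at hhalf
  · calc (#((P ∪ X) + S) : ℝ) ≤ #(P + S) + #(X + S) := by
          rw [union_add]; exact_mod_cast card_union_le _ _
      _ ≤ M * #P + M * #X := add_le_add hPS hXS
      _ = M * #(P ∪ X) := by rw [card_union_of_disjoint hPX]; push_cast; ring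

theorem exists_large_subset_card_add_sum_le {G ι : Type*} [AddCommGroup G] [DecidableEq G]
    [Fintype ι] {A : Finset G} (B : ι → Finset G) {K : ι → ℝ} (hK : ∀ i, 1 ≤ K i)
    (hAB : ∀ i, (#(A + B i) : ℝ) ≤ K i * #A) :
    ∃ A' ⊆ A, #A ≤ 2 * #A' ∧
      (#(A' + ∑ i, B i) : ℝ) ≤ (∏ i, (4 * Fintype.card ι * K i)) * #A := by
  have hK0 (i) : 0 ≤ K i := zero_le_one.trans (hK i)
  obtain ⟨A', hA'A, hhalf, hA'⟩ := exists_large_subset_card_add_le (A := A) (S := ∑ i, B i)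
      (M := ∏ i, (4 * Fintype.card ι * K i)) fun R hRA hR => by
    have hAR : (#A : ℝ) ≤ 2 * #R := by exact_mod_cast hR.le
    have hRB (i) : (#(R + B i) : ℝ) ≤ 2 * K i * #R := calc
      (#(R + B i) : ℝ) ≤ #(A + B i) := by gcongr
      _ ≤ K i * #A := hAB i
      _ ≤ 2 * K i * #R := by have := hK0 i; nlinarith
    have hR0 : R.Nonempty := card_pos.1 (by omega)
    obtain ⟨X, hXR, hX, hXB⟩ :=
      exists_subset_card_add_sum_le hR0 B (fun i => by linarith [hK i]) hRB
    refine ⟨X, hXR, hX, hXB.trans_eq ?_⟩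
    congr 1
    exact prod_congr rfl fun i _ => by ring
  refine ⟨A', hA'A, hhalf, hA'.trans ?_⟩
  have : 0 ≤ ∏ i, (4 * Fintype.card ι * K i) :=
    prod_nonneg fun i _ => by have := hK0 i; positivity
  gcongr

theorem Int.floor_add_sum_sub_mem_Icc {R ι : Type*} [Ring R] [LinearOrder R] [IsOrderedRing R]
    [FloorRing R] (x : R) (y : ι → R) (s : Finset ι) :
    ⌊x + ∑ i ∈ s, y i⌋ - (⌊x⌋ + ∑ i ∈ s, ⌊y i⌋) ∈ Set.Icc (0 : ℤ) #s := by
  classical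
  induction s using Finset.induction_on with
  | empty => simp
  | insert j s hj ih =>
    rw [sum_insert hj, sum_insert hj, card_insert_of_notMem hj,
      ← add_assoc, add_right_comm x]
    have h₁ := Int.le_floor_add (x + ∑ i ∈ s, y i) (y j)
    have h₂ := Int.le_floor_add_floor (x + ∑ i ∈ s, y i) (y j)
    simp only [Set.mem_Icc] at ih ⊢
    push_cast
    omega

section Grid

variable {δ : ℝ}

noncomputable def gridCells (δ : ℝ) (S : Finset ℝ) : Finset ℤ := S.image fun x => ⌊x / δ⌋

theorem cov1_coe_finset (hδ : 0 < δ) (S : Finset ℝ) : cov1 δ S = #(gridCells δ S) := by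
  rw [gridCells, ← Set.ncard_coe_finset, coe_image, cov1]
  congr 1
  ext k
  simp [Int.floor_eq_iff, le_div_iff₀ hδ, div_lt_iff₀ hδ]

theorem gridCells_filter_of_subset {S : Finset ℝ} {P : Finset ℤ} (hP : P ⊆ gridCells δ S) :
    gridCells δ (S.filter fun x => ⌊x / δ⌋ ∈ P) = P := by
  rw [gridCells, ← filter_image (p := (· ∈ P)), filter_mem_eq_inter, ← gridCells,
    inter_eq_right.2 hP]

theorem card_gridCells_add_le (S T : Finset ℝ) :
    #(gridCells δ S + gridCells δ T) ≤ 2 * #(gridCells δ (S + T)) := by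
  have hsub : gridCells δ S + gridCells δ T ⊆ gridCells δ (S + T) + Icc (-1) 0 := by
    intro _ hk
    simp only [gridCells, mem_add, mem_image] at hk
    obtain ⟨_, ⟨x, hx, rfl⟩, _, ⟨y, hy, rfl⟩, rfl⟩ := hk
    have h₁ := Int.le_floor_add (x / δ) (y / δ)
    have h₂ := Int.le_floor_add_floor (x / δ) (y / δ)
    rw [← add_div] at h₁ h₂
    refine mem_add.2 ⟨⌊(x + y) / δ⌋, mem_image_of_mem _ (add_mem_add hx hy),
      ⌊x / δ⌋ + ⌊y / δ⌋ - ⌊(x + y) / δ⌋, ?_, by ring⟩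
    rw [mem_Icc]
    omega
  calc #(gridCells δ S + gridCells δ T)
      ≤ #(gridCells δ (S + T)) * #(Icc (-1 : ℤ) 0) := (card_le_card hsub).trans card_add_le
    _ = 2 * #(gridCells δ (S + T)) := by simp [mul_comm]

theorem card_gridCells_add_sum_le {ι : Type*} [Fintype ι] (S : Finset ℝ) (T : ι → Finset ℝ) :
    #(gridCells δ (S + ∑ i, T i)) ≤
      (Fintype.card ι + 1) * #(gridCells δ S + ∑ i, gridCells δ (T i)) := by
  have hsub : gridCells δ (S + ∑ i, T i) ⊆
      gridCells δ S + ∑ i, gridCells δ (T i) + Icc 0 (Fintype.card ι : ℤ) := by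
    intro _ hk
    obtain ⟨_, hw, rfl⟩ := mem_image.1 hk
    rw [← mem_coe, coe_add, coe_sum, Set.mem_add] at hw
    obtain ⟨x, hx, _, hv, rfl⟩ := hw
    obtain ⟨y, hy, rfl⟩ := (Set.mem_fintype_sum _ _).1 hv
    have hsum : ∑ i, ⌊y i / δ⌋ ∈ ∑ i, gridCells δ (T i) := by
      rw [← mem_coe, coe_sum]
      exact Set.finsetSum_mem_finsetSum _ _ _ fun i _ => mem_image_of_mem _ (hy i)
    refine mem_add.2 ⟨⌊x / δ⌋ + ∑ i, ⌊y i / δ⌋, add_mem_add (mem_image_of_mem _ hx) hsum,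
      ⌊(x + ∑ i, y i) / δ⌋ - (⌊x / δ⌋ + ∑ i, ⌊y i / δ⌋), ?_, by ring⟩
    simpa [add_div, sum_div] using Int.floor_add_sum_sub_mem_Icc (x / δ) (y · / δ) univ
  calc #(gridCells δ (S + ∑ i, T i))
      ≤ #(gridCells δ S + ∑ i, gridCells δ (T i)) * #(Icc 0 (Fintype.card ι : ℤ)) :=
        (card_le_card hsub).trans card_add_le
    _ = (Fintype.card ι + 1) * #(gridCells δ S + ∑ i, gridCells δ (T i)) := by simp [mul_comm]

theorem exists_large_subset_cov1_add_sum_le {ι : Type*} [Fintype ι] (hδ : 0 < δ)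
    (A : Finset ℝ) (B : ι → Finset ℝ) {K : ι → ℝ} (hK : ∀ i, 1 ≤ K i)
    (hAB : ∀ i, (cov1 δ ↑(A + B i) : ℝ) ≤ K i * cov1 δ ↑A) :
    ∃ A' ⊆ A, cov1 δ ↑A ≤ 2 * cov1 δ ↑A' ∧
      (cov1 δ ↑(A' + ∑ i, B i) : ℝ) ≤
        (Fintype.card ι + 1) * (∏ i, (8 * Fintype.card ι * K i)) * cov1 δ ↑A := by
  simp only [cov1_coe_finset hδ] at hAB ⊢
  have hAB' (i) : (#(gridCells δ A + gridCells δ (B i)) : ℝ) ≤ 2 * K i * #(gridCells δ A) := by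
    have : (#(gridCells δ A + gridCells δ (B i)) : ℝ) ≤ 2 * #(gridCells δ (A + B i)) := by
      exact_mod_cast card_gridCells_add_le A (B i)
    linarith [hAB i]
  obtain ⟨P, hPA, hhalf, hP⟩ := exists_large_subset_card_add_sum_le
    (fun i => gridCells δ (B i)) (fun i => by linarith [hK i]) hAB'
  have hA' := gridCells_filter_of_subset hPA
  refine ⟨A.filter fun x => ⌊x / δ⌋ ∈ P, filter_subset _ _, by rwa [hA'], ?_⟩
  have hsum := card_gridCells_add_sum_le (δ := δ) (A.filter fun x => ⌊x / δ⌋ ∈ P) B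
  rw [hA'] at hsum
  calc (#(gridCells δ ((A.filter fun x => ⌊x / δ⌋ ∈ P) + ∑ i, B i)) : ℝ)
      ≤ (Fintype.card ι + 1) * #(P + ∑ i, gridCells δ (B i)) := by exact_mod_cast hsum
    _ ≤ (Fintype.card ι + 1) *
          ((∏ i, (4 * Fintype.card ι * (2 * K i))) * #(gridCells δ A)) := by gcongr
    _ = _ := by rw [← mul_assoc]; congr 2; exact prod_congr rfl fun i _ => by ring

end Grid

/-- Plünnecke–Ruzsa for covering numbers: if `|A + Bᵢ|_δ ≤ Kᵢ|A|_δ` for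
`i = 1,…,n`, then there is `A' ⊆ A` with `|A'|_δ ≥ |A|_δ/2` and
`|A' + B₁ + ⋯ + B_n|_δ ≲_n K₁⋯K_n·|A|_δ`. -/
theorem stmt19 (n : ℕ) : ∃ Cn : ℝ, 0 < Cn ∧
    ∀ (δ : ℝ) (A : Set ℝ) (B : Fin n → Set ℝ) (K : Fin n → ℝ),
      0 < δ → A.Finite → A.Nonempty → (∀ i, (B i).Finite) → (∀ i, 1 ≤ K i) →
      (∀ i, (cov1 δ (A + B i) : ℝ) ≤ K i * cov1 δ A) →
      ∃ A' ⊆ A, (cov1 δ A : ℝ) / 2 ≤ (cov1 δ A' : ℝ) ∧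
        (cov1 δ (A' + ∑ i, B i) : ℝ) ≤ Cn * (∏ i, K i) * cov1 δ A := by
  refine ⟨(n + 1) * (8 * n) ^ n, by rcases n with _ | n <;> positivity, ?_⟩
  intro δ A B K hδ hA _ hB hK hAB
  obtain ⟨A, rfl⟩ := hA.exists_finset_coe
  choose B' hB' using fun i => (hB i).exists_finset_coe
  obtain rfl : B = fun i => ↑(B' i) := funext fun i => (hB' i).symm
  simp only [← coe_add] at hAB
  obtain ⟨A', hA'A, hhalf, hA'⟩ := exists_large_subset_cov1_add_sum_le hδ A B' hK hAB
  refine ⟨A', coe_subset.2 hA'A, ?_, ?_⟩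
  · have : (cov1 δ ↑A : ℝ) ≤ 2 * cov1 δ ↑A' := by exact_mod_cast hhalf
    linarith
  · rw [← coe_sum, ← coe_add]
    refine hA'.trans_eq ?_
    simp only [Fintype.card_fin, prod_mul_distrib, prod_const, card_univ]
    ring
end
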